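/- arXiv:2504.12419 — 3 statements merged into one kernel-verified Lean document; each statement's English description precedes it below -/
import Mathlib

section
/- Let Q be a symmetric real n×n matrix and f(x) = xᵀQx for x ∈ {0,1}ⁿ. If X is uniformly distributed over {0,1}ⁿ, then the second moment of f(X) is E[f(X)²] = ∑_{i,j,k,l=1}^n Q_{i,j} Q_{k,l} · 2^{-|{i,j,k,l}|}, where |{i,j,k,l}| denotes the number of distinct values among the indices i, j, k, l. -/
open Finset

noncomputable section

/-- Real value of a bit. -/
def bval : Bool → ℝ := fun b => if b then 1 else 0

/-- Expectation of `g` when `X` is uniform over `{0,1}ⁿ`: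
    `E[g(X)] = 2⁻ⁿ ∑_{x ∈ {0,1}ⁿ} g(x)`. -/
def E (n : ℕ) (g : (Fin n → Bool) → ℝ) : ℝ :=
  (2 ^ n : ℝ)⁻¹ * ∑ x : Fin n → Bool, g x

/-- Covariance of `g(X)` and `h(X)` for `X` uniform over `{0,1}ⁿ`. -/
def Cov (n : ℕ) (g h : (Fin n → Bool) → ℝ) : ℝ :=
  E n (fun x => g x * h x) - E n g * E n h

lemma sum_prod_bval (n : ℕ) (S : Finset (Fin n)) :
    ∑ x : Fin n → Bool, ∏ m ∈ S, bval (x m) = 2 ^ (Sᶜ.card) := by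
  have h1 : ∀ x : Fin n → Bool, ∏ m ∈ S, bval (x m)
      = ∏ m, (if m ∈ S then bval (x m) else 1) := by
    intro x
    rw [Finset.prod_ite_mem, Finset.univ_inter]
  simp_rw [h1]
  rw [← Fintype.piFinset_univ, ← Finset.prod_univ_sum (t := fun _ => (univ : Finset Bool))
    (f := fun m b => if m ∈ S then bval b else 1)]
  have h2 : ∀ m : Fin n, (∑ b : Bool, if m ∈ S then bval b else 1)
      = if m ∈ Sᶜ then 2 else 1 := by
    intro m
    by_cases hm : m ∈ S <;> simp [hm, bval]
  simp_rw [h2]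
  rw [Finset.prod_ite_mem, Finset.univ_inter, Finset.prod_const]

lemma E_prod_bval (n : ℕ) (S : Finset (Fin n)) :
    (2 ^ n : ℝ)⁻¹ * ∑ x : Fin n → Bool, ∏ m ∈ S, bval (x m)
      = (2 : ℝ) ^ (-(S.card : ℤ)) := by
  rw [sum_prod_bval]
  have hc : S.card + Sᶜ.card = n := by
    rw [Finset.card_add_card_compl, Fintype.card_fin]
  have h2 : (2 : ℝ) ^ n = 2 ^ S.card * 2 ^ Sᶜ.card := by
    rw [← pow_add, hc]
  rw [h2, zpow_neg, zpow_natCast, mul_inv, mul_assoc,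
    inv_mul_cancel₀ (by positivity), mul_one]

/-- second moment of a symmetric QUBO objective under the uniform
distribution over `{0,1}ⁿ`. -/
theorem qubo_uniform_second_moment (n : ℕ) (Q : Matrix (Fin n) (Fin n) ℝ)
    (hQ : Q.IsSymm) :
    E n (fun x => (∑ i, ∑ j, Q i j * bval (x i) * bval (x j)) ^ 2) =
      ∑ i, ∑ j, ∑ k, ∑ l,
        Q i j * Q k l *
          (2 : ℝ) ^ (-((({i, j, k, l} : Finset (Fin n)).card : ℤ))) := by
  have expand : ∀ x : Fin n → Bool,
      (∑ i, ∑ j, Q i j * bval (x i) * bval (x j)) ^ 2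
        = ∑ i, ∑ j, ∑ k, ∑ l,
            Q i j * Q k l * ∏ m ∈ ({i, j, k, l} : Finset (Fin n)), bval (x m) := by
    intro x
    have hb : ∀ i j k l : Fin n,
        ∏ m ∈ ({i, j, k, l} : Finset (Fin n)), bval (x m)
          = bval (x i) * bval (x j) * bval (x k) * bval (x l) := by
      intro i j k l
      have : ∀ m ∈ ({i, j, k, l} : Finset (Fin n)), bval (x m) = if x m then 1 else 0 := by
        intro m _; rfl
      rw [Finset.prod_congr rfl this, Finset.prod_boole]
      simp only [Finset.mem_insert, Finset.mem_singleton, forall_eq_or_imp, forall_eq]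
      cases hi : x i <;> cases hj : x j <;> cases hk : x k <;> cases hl : x l <;>
        simp [bval, hi, hj, hk, hl]
    simp_rw [hb]
    rw [sq, Finset.sum_mul_sum]
    simp_rw [Finset.sum_mul_sum]
    refine Finset.sum_congr rfl fun i _ => ?_
    rw [Finset.sum_comm]
    exact Finset.sum_congr rfl fun j _ => Finset.sum_congr rfl fun k _ =>
      Finset.sum_congr rfl fun l _ => by ring
  rw [E]
  simp_rw [expand]
  have hswap : ∑ x : Fin n → Bool, ∑ i, ∑ j, ∑ k, ∑ l,
      Q i j * Q k l * ∏ m ∈ ({i, j, k, l} : Finset (Fin n)), bval (x m)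
      = ∑ i, ∑ j, ∑ k, ∑ l, ∑ x : Fin n → Bool,
      Q i j * Q k l * ∏ m ∈ ({i, j, k, l} : Finset (Fin n)), bval (x m) := by
    rw [Finset.sum_comm]
    refine Finset.sum_congr rfl fun i _ => ?_
    rw [Finset.sum_comm]
    refine Finset.sum_congr rfl fun j _ => ?_
    rw [Finset.sum_comm]
    refine Finset.sum_congr rfl fun k _ => ?_
    rw [Finset.sum_comm]
  rw [hswap, Finset.mul_sum]
  refine Finset.sum_congr rfl fun i _ => ?_
  rw [Finset.mul_sum]
  refine Finset.sum_congr rfl fun j _ => ?_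
  rw [Finset.mul_sum]
  refine Finset.sum_congr rfl fun k _ => ?_
  rw [Finset.mul_sum]
  refine Finset.sum_congr rfl fun l _ => ?_
  rw [← E_prod_bval n ({i, j, k, l} : Finset (Fin n)), ← Finset.mul_sum]
  ring
end
end

section
/- Let Q be a symmetric real n×n matrix and f(x) = xᵀQx for x ∈ {0,1}ⁿ. If X is uniformly distributed over {0,1}ⁿ (equivalently, X is a vector of n independent Bernoulli(1/2) variables), then the variance Var(f(X)) = E[f(X)²] − E[f(X)]² equals ∑_i [ (1/4)Q_{i,i}² + (1/8)∑_{k≠i} Q_{i,i}(Q_{k,i} + Q_{i,k}) ] + ∑_i ∑_{j≠i} Q_{i,j}[ (3/16)(Q_{i,j} + Q_{j,i}) + (1/8)(Q_{i,i} + Q_{j,j}) ] + ∑_i ∑_{j≠i} Q_{i,j} ∑_{k∉{i,j}} (1/16)(Q_{k,i} + Q_{k,j} + Q_{i,k} + Q_{j,k}). -/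
open Finset

noncomputable section

namespace QuboVarAux

variable {n : ℕ}

lemma bval_sq (b : Bool) : bval b * bval b = bval b := by cases b <;> simp [bval]

lemma bprod_insert (x : Fin n → Bool) (a : Fin n) (S : Finset (Fin n)) :
    bval (x a) * ∏ t ∈ S, bval (x t) = ∏ t ∈ insert a S, bval (x t) := by
  by_cases h : a ∈ S
  · rw [Finset.insert_eq_self.2 h, ← Finset.mul_prod_erase S _ h, ← mul_assoc, bval_sq]
  · rw [Finset.prod_insert h]

lemma moment (n : ℕ) (S : Finset (Fin n)) :
    E n (fun x => ∏ i ∈ S, bval (x i)) = ((2:ℝ) ^ S.card)⁻¹ := by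
  have key : ∑ x : Fin n → Bool, ∏ i ∈ S, bval (x i) = (2:ℝ) ^ (Sᶜ.card) := by
    have h1 : ∀ x : Fin n → Bool, ∏ i ∈ S, bval (x i)
        = ∏ i : Fin n, (fun i b => if i ∈ S then bval b else (1:ℝ)) i (x i) := by
      intro x
      simp only []
      rw [Finset.prod_ite_mem, Finset.univ_inter]
    simp_rw [h1]
    rw [← Fintype.prod_sum (fun i b => if i ∈ S then bval b else (1:ℝ))]
    have h2 : ∀ i : Fin n, (∑ b : Bool, (if i ∈ S then bval b else (1:ℝ)))
        = if i ∈ Sᶜ then (2:ℝ) else 1 := by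
      intro i; by_cases h : i ∈ S <;> simp [h, bval]
    simp_rw [h2]
    rw [Finset.prod_ite_mem, Finset.univ_inter, Finset.prod_const]
  rw [E, key]
  have h2 : (2:ℝ) ^ S.card * (2:ℝ) ^ (Sᶜ.card) = 2 ^ n := by
    rw [← pow_add]; congr 1
    have := Finset.card_add_card_compl S
    simp only [Fintype.card_fin] at this
    omega
  rw [← h2, mul_inv, mul_assoc, inv_mul_cancel₀ (by positivity), mul_one]

/-- The variance weight attached to the pair of index pairs `(i,j)` and `(k,l)`. -/
def w {n : ℕ} (i j k l : Fin n) : ℝ :=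
  ((2:ℝ) ^ (({i,j,k,l} : Finset (Fin n)).card))⁻¹ -
    ((2:ℝ) ^ (({i,j} : Finset (Fin n)).card))⁻¹ * ((2:ℝ) ^ (({k,l} : Finset (Fin n)).card))⁻¹

lemma w1 (i : Fin n) : w i i i i = 1/4 := by
  have e : ({i,i,i,i} : Finset (Fin n)) = {i} := by ext a; simp
  have e2 : ({i,i} : Finset (Fin n)) = {i} := by ext a; simp
  rw [w, e, e2, Finset.card_singleton]; norm_num

lemma w2 {i l : Fin n} (h : l ≠ i) : w i i i l = 1/8 := by
  have e : ({i,i,i,l} : Finset (Fin n)) = {i,l} := by ext a; simp; try tauto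
  have e2 : ({i,i} : Finset (Fin n)) = {i} := by ext a; simp
  rw [w, e, e2, Finset.card_singleton, Finset.card_pair (Ne.symm h)]
  norm_num

lemma w3 {i k : Fin n} (h : k ≠ i) : w i i k i = 1/8 := by
  have e : ({i,i,k,i} : Finset (Fin n)) = {i,k} := by ext a; simp; try tauto
  have e2 : ({i,i} : Finset (Fin n)) = {i} := by ext a; simp
  have e3 : ({k,i} : Finset (Fin n)) = {i,k} := by ext a; simp; try tauto
  rw [w, e, e2, e3, Finset.card_singleton, Finset.card_pair (Ne.symm h)]
  norm_num

lemma w4 {i k l : Fin n} (hk : k ≠ i) (hl : l ≠ i) : w i i k l = 0 := by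
  have e2 : ({i,i} : Finset (Fin n)) = {i} := by ext a; simp
  by_cases hlk : l = k
  · subst hlk
    have e : ({i,i,l,l} : Finset (Fin n)) = {i,l} := by ext a; simp; try tauto
    have e3 : ({l,l} : Finset (Fin n)) = {l} := by ext a; simp
    rw [w, e, e2, e3, Finset.card_singleton, Finset.card_singleton,
      Finset.card_pair (Ne.symm hl)]
    norm_num
  · have e : ({i,i,k,l} : Finset (Fin n)) = {i,k,l} := by ext a; simp; try tauto
    have c3 : ({i,k,l} : Finset (Fin n)).card = 3 := by
      rw [Finset.card_insert_of_notMem (by simp [Ne.symm hk, Ne.symm hl]),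
        Finset.card_pair (fun h => hlk h.symm)]
    rw [w, e, e2, c3, Finset.card_singleton, Finset.card_pair (fun h => hlk h.symm)]
    norm_num

lemma w5 {i j : Fin n} (h : j ≠ i) : w i j i i = 1/8 := by
  have e : ({i,j,i,i} : Finset (Fin n)) = {i,j} := by ext a; simp; try tauto
  have e2 : ({i,i} : Finset (Fin n)) = {i} := by ext a; simp
  rw [w, e, e2, Finset.card_singleton, Finset.card_pair (Ne.symm h)]
  norm_num

lemma w6 {i j : Fin n} (h : j ≠ i) : w i j i j = 3/16 := by
  have e : ({i,j,i,j} : Finset (Fin n)) = {i,j} := by ext a; simp; try tauto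
  rw [w, e, Finset.card_pair (Ne.symm h)]; norm_num

lemma w7 {i j : Fin n} (h : j ≠ i) : w i j j i = 3/16 := by
  have e : ({i,j,j,i} : Finset (Fin n)) = {i,j} := by ext a; simp; try tauto
  have e3 : ({j,i} : Finset (Fin n)) = {i,j} := by ext a; simp; try tauto
  rw [w, e, e3, Finset.card_pair (Ne.symm h)]; norm_num

lemma w8 {i j : Fin n} (h : j ≠ i) : w i j j j = 1/8 := by
  have e : ({i,j,j,j} : Finset (Fin n)) = {i,j} := by ext a; simp; try tauto
  have e3 : ({j,j} : Finset (Fin n)) = {j} := by ext a; simp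
  rw [w, e, e3, Finset.card_singleton, Finset.card_pair (Ne.symm h)]; norm_num

lemma w9 {i j l : Fin n} (h : j ≠ i) (hl1 : l ≠ i) (hl2 : l ≠ j) : w i j i l = 1/16 := by
  have e : ({i,j,i,l} : Finset (Fin n)) = {i,j,l} := by ext a; simp; try tauto
  have c3 : ({i,j,l} : Finset (Fin n)).card = 3 := by
    rw [Finset.card_insert_of_notMem (by simp [Ne.symm h, Ne.symm hl1]),
      Finset.card_pair (Ne.symm hl2)]
  rw [w, e, c3, Finset.card_pair (Ne.symm h), Finset.card_pair (Ne.symm hl1)]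
  norm_num

lemma w10 {i j l : Fin n} (h : j ≠ i) (hl1 : l ≠ i) (hl2 : l ≠ j) : w i j j l = 1/16 := by
  have e : ({i,j,j,l} : Finset (Fin n)) = {i,j,l} := by ext a; simp; try tauto
  have c3 : ({i,j,l} : Finset (Fin n)).card = 3 := by
    rw [Finset.card_insert_of_notMem (by simp [Ne.symm h, Ne.symm hl1]),
      Finset.card_pair (Ne.symm hl2)]
  rw [w, e, c3, Finset.card_pair (Ne.symm h), Finset.card_pair (Ne.symm hl2)]
  norm_num

lemma w11 {i j k : Fin n} (h : j ≠ i) (hk1 : k ≠ i) (hk2 : k ≠ j) : w i j k i = 1/16 := by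
  have e : ({i,j,k,i} : Finset (Fin n)) = {i,j,k} := by ext a; simp; try tauto
  have c3 : ({i,j,k} : Finset (Fin n)).card = 3 := by
    rw [Finset.card_insert_of_notMem (by simp [Ne.symm h, Ne.symm hk1]),
      Finset.card_pair (Ne.symm hk2)]
  rw [w, e, c3, Finset.card_pair (Ne.symm h), Finset.card_pair hk1]
  norm_num

lemma w12 {i j k : Fin n} (h : j ≠ i) (hk1 : k ≠ i) (hk2 : k ≠ j) : w i j k j = 1/16 := by
  have e : ({i,j,k,j} : Finset (Fin n)) = {i,j,k} := by ext a; simp; try tauto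
  have c3 : ({i,j,k} : Finset (Fin n)).card = 3 := by
    rw [Finset.card_insert_of_notMem (by simp [Ne.symm h, Ne.symm hk1]),
      Finset.card_pair (Ne.symm hk2)]
  rw [w, e, c3, Finset.card_pair (Ne.symm h), Finset.card_pair hk2]
  norm_num

lemma w13 {i j k l : Fin n} (h : j ≠ i) (hk1 : k ≠ i) (hk2 : k ≠ j)
    (hl1 : l ≠ i) (hl2 : l ≠ j) : w i j k l = 0 := by
  by_cases hlk : l = k
  · subst hlk
    have e : ({i,j,l,l} : Finset (Fin n)) = {i,j,l} := by ext a; simp; try tauto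
    have e3 : ({l,l} : Finset (Fin n)) = {l} := by ext a; simp
    have c3 : ({i,j,l} : Finset (Fin n)).card = 3 := by
      rw [Finset.card_insert_of_notMem (by simp [Ne.symm h, Ne.symm hl1]),
        Finset.card_pair (Ne.symm hl2)]
    rw [w, e, e3, c3, Finset.card_singleton, Finset.card_pair (Ne.symm h)]
    norm_num
  · have c4 : ({i,j,k,l} : Finset (Fin n)).card = 4 := by
      rw [Finset.card_insert_of_notMem (by simp [Ne.symm h, Ne.symm hk1, Ne.symm hl1]),
        Finset.card_insert_of_notMem (by simp [Ne.symm hk2, Ne.symm hl2]),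
        Finset.card_pair (fun hh => hlk hh.symm)]
    rw [w, c4, Finset.card_pair (Ne.symm h), Finset.card_pair (fun hh => hlk hh.symm)]
    norm_num

lemma E_sum {α : Type*} (s : Finset α) (F : α → (Fin n → Bool) → ℝ) :
    E n (fun x => ∑ i ∈ s, F i x) = ∑ i ∈ s, E n (F i) := by
  unfold E
  rw [Finset.sum_comm, Finset.mul_sum]

lemma E_const_mul (c : ℝ) (g : (Fin n → Bool) → ℝ) :
    E n (fun x => c * g x) = c * E n g := by
  unfold E; rw [← Finset.mul_sum]; ring

lemma expand2 {α : Type*} [Fintype α] (a : α → α → ℝ) :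
    (∑ i, ∑ j, a i j) * (∑ k, ∑ l, a k l) = ∑ i, ∑ j, ∑ k, ∑ l, a i j * a k l := by
  rw [Finset.sum_mul_sum]
  refine Finset.sum_congr rfl fun i _ => ?_
  calc ∑ k, (∑ j, a i j) * (∑ l, a k l)
      = ∑ k, ∑ j, ∑ l, a i j * a k l := by
        refine Finset.sum_congr rfl fun k _ => ?_
        rw [Finset.sum_mul_sum]
    _ = ∑ j, ∑ k, ∑ l, a i j * a k l := Finset.sum_comm

lemma Ef (Q : Matrix (Fin n) (Fin n) ℝ) :
    E n (fun x => ∑ i, ∑ j, Q i j * bval (x i) * bval (x j))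
      = ∑ i, ∑ j, Q i j * ((2:ℝ) ^ (({i,j} : Finset (Fin n)).card))⁻¹ := by
  have h1 : (fun x : Fin n → Bool => ∑ i, ∑ j, Q i j * bval (x i) * bval (x j))
      = fun x => ∑ i, ∑ j, Q i j * ∏ t ∈ ({i,j} : Finset (Fin n)), bval (x t) := by
    funext x
    refine Finset.sum_congr rfl fun i _ => Finset.sum_congr rfl fun j _ => ?_
    rw [← bprod_insert, Finset.prod_singleton, mul_assoc]
  rw [h1, E_sum]
  refine Finset.sum_congr rfl fun i _ => ?_
  rw [E_sum]
  refine Finset.sum_congr rfl fun j _ => ?_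
  rw [E_const_mul, moment]

lemma Ef2 (Q : Matrix (Fin n) (Fin n) ℝ) :
    E n (fun x => (∑ i, ∑ j, Q i j * bval (x i) * bval (x j)) ^ 2)
      = ∑ i, ∑ j, ∑ k, ∑ l, Q i j * Q k l *
          ((2:ℝ) ^ (({i,j,k,l} : Finset (Fin n)).card))⁻¹ := by
  have h1 : (fun x : Fin n → Bool => (∑ i, ∑ j, Q i j * bval (x i) * bval (x j)) ^ 2)
      = fun x => ∑ i, ∑ j, ∑ k, ∑ l, Q i j * Q k l *
          ∏ t ∈ ({i,j,k,l} : Finset (Fin n)), bval (x t) := by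
    funext x
    rw [sq, expand2]
    refine Finset.sum_congr rfl fun i _ => Finset.sum_congr rfl fun j _ =>
      Finset.sum_congr rfl fun k _ => Finset.sum_congr rfl fun l _ => ?_
    rw [← bprod_insert, ← bprod_insert, ← bprod_insert, Finset.prod_singleton]
    ring
  rw [h1, E_sum]
  refine Finset.sum_congr rfl fun i _ => ?_
  rw [E_sum]; refine Finset.sum_congr rfl fun j _ => ?_
  rw [E_sum]; refine Finset.sum_congr rfl fun k _ => ?_
  rw [E_sum]; refine Finset.sum_congr rfl fun l _ => ?_
  rw [E_const_mul, moment]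

lemma varexp (Q : Matrix (Fin n) (Fin n) ℝ) :
    E n (fun x => (∑ i, ∑ j, Q i j * bval (x i) * bval (x j)) ^ 2) -
        (E n (fun x => ∑ i, ∑ j, Q i j * bval (x i) * bval (x j))) ^ 2
      = ∑ i, ∑ j, Q i j * ∑ k, ∑ l, Q k l * w i j k l := by
  rw [Ef2, sq, Ef, expand2, ← Finset.sum_sub_distrib]
  refine Finset.sum_congr rfl fun i _ => ?_
  rw [← Finset.sum_sub_distrib]
  refine Finset.sum_congr rfl fun j _ => ?_
  rw [Finset.mul_sum, ← Finset.sum_sub_distrib]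
  refine Finset.sum_congr rfl fun k _ => ?_
  rw [Finset.mul_sum, ← Finset.sum_sub_distrib]
  refine Finset.sum_congr rfl fun l _ => ?_
  rw [w]; ring

lemma innerA (Q : Matrix (Fin n) (Fin n) ℝ) (i : Fin n) :
    ∑ k, ∑ l, Q k l * w i i k l
      = (1/4) * Q i i + (1/8) * ∑ k ∈ univ.erase i, (Q k i + Q i k) := by
  rw [← Finset.add_sum_erase _ (fun k => ∑ l, Q k l * w i i k l) (Finset.mem_univ i),
      ← Finset.add_sum_erase _ (fun l => Q i l * w i i i l) (Finset.mem_univ i), w1]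
  have h1 : ∑ l ∈ univ.erase i, Q i l * w i i i l
      = ∑ l ∈ univ.erase i, (1/8) * Q i l := by
    refine Finset.sum_congr rfl fun l hl => ?_
    rw [w2 (Finset.mem_erase.1 hl).1]; ring
  have h2 : ∑ k ∈ univ.erase i, ∑ l, Q k l * w i i k l
      = ∑ k ∈ univ.erase i, (1/8) * Q k i := by
    refine Finset.sum_congr rfl fun k hk => ?_
    have hki := (Finset.mem_erase.1 hk).1
    rw [← Finset.add_sum_erase _ (fun l => Q k l * w i i k l) (Finset.mem_univ i), w3 hki]
    have hz : ∑ l ∈ univ.erase i, Q k l * w i i k l = 0 := by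
      refine Finset.sum_eq_zero fun l hl => ?_
      rw [w4 hki (Finset.mem_erase.1 hl).1, mul_zero]
    rw [hz]; ring
  rw [h1, h2, Finset.mul_sum, add_assoc, ← Finset.sum_add_distrib]
  rw [show Q i i * (1/4) = 1/4 * Q i i by ring]
  congr 1
  refine Finset.sum_congr rfl fun k _ => ?_
  ring

lemma innerB (Q : Matrix (Fin n) (Fin n) ℝ) {i j : Fin n} (hji : j ≠ i) :
    ∑ k, ∑ l, Q k l * w i j k l
      = (3/16)*(Q i j + Q j i) + (1/8)*(Q i i + Q j j)
        + ∑ k ∈ univ \ {i,j}, (1/16)*(Q k i + Q k j + Q i k + Q j k) := by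
  have hij : i ≠ j := Ne.symm hji
  have hcompl : ∀ l : Fin n, l ∈ univ \ ({i,j} : Finset (Fin n)) → l ≠ i ∧ l ≠ j := by
    intro l hl; simp at hl; tauto
  have hrow_i : ∑ l, Q i l * w i j i l
      = Q i i * (1/8) + Q i j * (3/16) + ∑ l ∈ univ \ ({i,j} : Finset (Fin n)), Q i l * (1/16) := by
    rw [← Finset.sum_add_sum_compl ({i,j} : Finset (Fin n)), Finset.sum_pair hij,
        w5 hji, w6 hji, Finset.compl_eq_univ_sdiff]
    congr 1
    refine Finset.sum_congr rfl fun l hl => ?_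
    obtain ⟨h1, h2⟩ := hcompl l hl
    rw [w9 hji h1 h2]
  have hrow_j : ∑ l, Q j l * w i j j l
      = Q j i * (3/16) + Q j j * (1/8) + ∑ l ∈ univ \ ({i,j} : Finset (Fin n)), Q j l * (1/16) := by
    rw [← Finset.sum_add_sum_compl ({i,j} : Finset (Fin n)), Finset.sum_pair hij,
        w7 hji, w8 hji, Finset.compl_eq_univ_sdiff]
    congr 1
    refine Finset.sum_congr rfl fun l hl => ?_
    obtain ⟨h1, h2⟩ := hcompl l hl
    rw [w10 hji h1 h2]
  have hrows_out : ∑ k ∈ univ \ ({i,j} : Finset (Fin n)), ∑ l, Q k l * w i j k l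
      = ∑ k ∈ univ \ ({i,j} : Finset (Fin n)), (Q k i * (1/16) + Q k j * (1/16)) := by
    refine Finset.sum_congr rfl fun k hk => ?_
    obtain ⟨hk1, hk2⟩ := hcompl k hk
    rw [← Finset.sum_add_sum_compl ({i,j} : Finset (Fin n)), Finset.sum_pair hij,
        w11 hji hk1 hk2, w12 hji hk1 hk2, Finset.compl_eq_univ_sdiff]
    have hz : ∑ l ∈ univ \ ({i,j} : Finset (Fin n)), Q k l * w i j k l = 0 := by
      refine Finset.sum_eq_zero fun l hl => ?_
      obtain ⟨hl1, hl2⟩ := hcompl l hl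
      rw [w13 hji hk1 hk2 hl1 hl2, mul_zero]
    rw [hz, add_zero]
  rw [← Finset.sum_add_sum_compl ({i,j} : Finset (Fin n)), Finset.sum_pair hij,
      Finset.compl_eq_univ_sdiff, hrow_i, hrow_j, hrows_out]
  have hD : ∑ k ∈ univ \ ({i,j} : Finset (Fin n)), (1/16)*(Q k i + Q k j + Q i k + Q j k)
      = (∑ l ∈ univ \ ({i,j} : Finset (Fin n)), Q i l * (1/16))
        + (∑ l ∈ univ \ ({i,j} : Finset (Fin n)), Q j l * (1/16))
        + ∑ k ∈ univ \ ({i,j} : Finset (Fin n)), (Q k i * (1/16) + Q k j * (1/16)) := by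
    rw [← Finset.sum_add_distrib, ← Finset.sum_add_distrib]
    refine Finset.sum_congr rfl fun k _ => ?_; ring
  rw [hD]; ring

end QuboVarAux

open QuboVarAux in
/-- closed-form variance of a symmetric QUBO objective under the
uniform distribution over `{0,1}ⁿ`. -/
theorem qubo_uniform_variance (n : ℕ) (Q : Matrix (Fin n) (Fin n) ℝ)
    (hQ : Q.IsSymm) :
    E n (fun x => (∑ i, ∑ j, Q i j * bval (x i) * bval (x j)) ^ 2) -
        (E n (fun x => ∑ i, ∑ j, Q i j * bval (x i) * bval (x j))) ^ 2 =
      (∑ i, ((1 / 4) * (Q i i) ^ 2 +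
        (1 / 8) * ∑ k ∈ Finset.univ.erase i, Q i i * (Q k i + Q i k))) +
      (∑ i, ∑ j ∈ Finset.univ.erase i,
        Q i j * ((3 / 16) * (Q i j + Q j i) + (1 / 8) * (Q i i + Q j j))) +
      (∑ i, ∑ j ∈ Finset.univ.erase i,
        Q i j * ∑ k ∈ Finset.univ \ {i, j},
          (1 / 16) * (Q k i + Q k j + Q i k + Q j k)) := by
  rw [varexp]
  have main : ∀ i : Fin n, ∑ j, Q i j * ∑ k, ∑ l, Q k l * w i j k l
      = ((1/4)*(Q i i)^2 + (1/8)*∑ k ∈ univ.erase i, Q i i * (Q k i + Q i k))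
        + ((∑ j ∈ univ.erase i, Q i j * ((3/16)*(Q i j + Q j i) + (1/8)*(Q i i + Q j j)))
          + ∑ j ∈ univ.erase i,
              Q i j * ∑ k ∈ univ \ {i,j}, (1/16)*(Q k i + Q k j + Q i k + Q j k)) := by
    intro i
    rw [← Finset.add_sum_erase _ (fun j => Q i j * ∑ k, ∑ l, Q k l * w i j k l)
        (Finset.mem_univ i), innerA]
    have hrest : ∑ j ∈ univ.erase i, Q i j * ∑ k, ∑ l, Q k l * w i j k l
        = ∑ j ∈ univ.erase i, (Q i j * ((3/16)*(Q i j + Q j i) + (1/8)*(Q i i + Q j j))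
            + Q i j * ∑ k ∈ univ \ {i,j}, (1/16)*(Q k i + Q k j + Q i k + Q j k)) := by
      refine Finset.sum_congr rfl fun j hj => ?_
      rw [innerB Q (Finset.mem_erase.1 hj).1]; ring
    have hA : Q i i * ((1/4) * Q i i + (1/8) * ∑ k ∈ univ.erase i, (Q k i + Q i k))
        = (1/4)*(Q i i)^2 + (1/8)*∑ k ∈ univ.erase i, Q i i * (Q k i + Q i k) := by
      rw [← Finset.mul_sum]; ring
    rw [hrest, hA, Finset.sum_add_distrib]
  calc ∑ i, ∑ j, Q i j * ∑ k, ∑ l, Q k l * w i j k l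
      = ∑ i : Fin n, (((1/4)*(Q i i)^2 + (1/8)*∑ k ∈ univ.erase i, Q i i * (Q k i + Q i k))
        + ((∑ j ∈ univ.erase i, Q i j * ((3/16)*(Q i j + Q j i) + (1/8)*(Q i i + Q j j)))
          + ∑ j ∈ univ.erase i,
              Q i j * ∑ k ∈ univ \ {i,j}, (1/16)*(Q k i + Q k j + Q i k + Q j k))) :=
        Finset.sum_congr rfl fun i _ => main i
    _ = _ := by
        simp only [Finset.sum_add_distrib]
        ring
end
end

section
/- Let Q be a symmetric real n×n matrix, f(x) = xᵀQx for x ∈ {0,1}ⁿ, and let X be uniformly distributed over {0,1}ⁿ. Then the quantity computed by the fast variance algorithm, namely v = (1/16)·∑_{i≠j} Q_{i,j}(Q_{i,j} + Q_{j,i}) + (1/16)·∑_{i=1}^n ∑_{j=1}^n ∑_{k=1}^n Q_{i,j}(Q_{k,i} + Q_{k,j} + Q_{i,k} + Q_{j,k}), equals the variance Var(f(X)) = E[f(X)²] − E[f(X)]². -/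
open Finset

noncomputable section

lemma bval_mul_self (b : Bool) : bval b * bval b = bval b := by
  cases b <;> simp [bval]

lemma bval_prod_insert {n : ℕ} (x : Fin n → Bool) (a : Fin n) (S : Finset (Fin n)) :
    bval (x a) * ∏ m ∈ S, bval (x m) = ∏ m ∈ insert a S, bval (x m) := by
  by_cases h : a ∈ S
  · rw [Finset.insert_eq_self.mpr h, ← Finset.mul_prod_erase S _ h, ← mul_assoc, bval_mul_self]
  · rw [Finset.prod_insert h]

lemma E_prod {n : ℕ} (S : Finset (Fin n)) :
    E n (fun x => ∏ i ∈ S, bval (x i)) = (2 : ℝ)⁻¹ ^ S.card := by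
  have h1 : ∀ x : Fin n → Bool,
      (∏ i ∈ S, bval (x i)) = ∏ i : Fin n, (if i ∈ S then bval (x i) else 1) := by
    intro x; rw [Fintype.prod_ite_mem]
  unfold E
  simp only [h1]
  have h2 := Finset.prod_univ_sum (fun _ : Fin n => (Finset.univ : Finset Bool))
    (fun (i : Fin n) (b : Bool) => if i ∈ S then bval b else 1)
  simp only [Fintype.piFinset_univ] at h2
  rw [← h2]
  have h2 : ∀ i : Fin n, (∑ b : Bool, if i ∈ S then bval b else 1)
      = if i ∈ S then (1 : ℝ) else 2 := by
    intro i; by_cases h : i ∈ S <;> simp [h, bval]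
  simp only [h2]
  rw [Finset.prod_ite, Finset.prod_const_one, one_mul, Finset.prod_const]
  have hcard : (Finset.univ.filter (fun i : Fin n => ¬ i ∈ S)).card = n - S.card := by
    rw [Finset.filter_not, Finset.filter_mem_eq_inter, Finset.univ_inter]
    simp [Finset.card_sdiff_of_subset (Finset.subset_univ S)]
  rw [hcard]
  have hc : S.card ≤ n := by simpa using Finset.card_le_univ S
  have hkey : (2 : ℝ) ^ (n - S.card) * 2 ^ S.card = 2 ^ n := by
    rw [← pow_add]; congr 1; omega
  have h2n : (2 : ℝ) ^ n ≠ 0 := by positivity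
  have h2c : (2 : ℝ) ^ S.card ≠ 0 := by positivity
  rw [inv_pow]
  field_simp
  linarith [hkey]

lemma E_mul_pair {n : ℕ} (i j : Fin n) :
    E n (fun x => bval (x i) * bval (x j)) = (2 : ℝ)⁻¹ ^ ({i, j} : Finset (Fin n)).card := by
  have h : ∀ x : Fin n → Bool,
      bval (x i) * bval (x j) = ∏ m ∈ ({i, j} : Finset (Fin n)), bval (x m) := by
    intro x
    rw [show ({i, j} : Finset (Fin n)) = insert i {j} from rfl, ← bval_prod_insert,
      Finset.prod_singleton]
  simp only [h]; exact E_prod _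

lemma E_mul_quad {n : ℕ} (i j k l : Fin n) :
    E n (fun x => bval (x i) * bval (x j) * (bval (x k) * bval (x l)))
      = (2 : ℝ)⁻¹ ^ ({i, j, k, l} : Finset (Fin n)).card := by
  have h : ∀ x : Fin n → Bool,
      bval (x i) * bval (x j) * (bval (x k) * bval (x l))
        = ∏ m ∈ ({i, j, k, l} : Finset (Fin n)), bval (x m) := by
    intro x
    rw [show ({i, j, k, l} : Finset (Fin n)) = insert i (insert j (insert k {l})) from rfl,
      ← bval_prod_insert, ← bval_prod_insert, ← bval_prod_insert, Finset.prod_singleton]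
    ring
  simp only [h]; exact E_prod _

lemma E_sum {n : ℕ} {α : Type*} (s : Finset α) (F : α → (Fin n → Bool) → ℝ) :
    E n (fun x => ∑ a ∈ s, F a x) = ∑ a ∈ s, E n (F a) := by
  unfold E
  rw [Finset.sum_comm, Finset.mul_sum]

lemma E_const_mul {n : ℕ} (c : ℝ) (g : (Fin n → Bool) → ℝ) :
    E n (fun x => c * g x) = c * E n g := by
  unfold E
  rw [← Finset.mul_sum]; ring

/-- the pointwise coefficient identity -/
lemma key_coeff {n : ℕ} (i j k l : Fin n) :
    (2 : ℝ)⁻¹ ^ ({i, j, k, l} : Finset (Fin n)).card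
        - (2 : ℝ)⁻¹ ^ ({i, j} : Finset (Fin n)).card * (2 : ℝ)⁻¹ ^ ({k, l} : Finset (Fin n)).card
      = (1 / 16) * ((if i = j then 0 else
            (if k = i then (if l = j then (1 : ℝ) else 0) else 0)
            + (if k = j then (if l = i then (1 : ℝ) else 0) else 0))
          + ((if l = i then (1 : ℝ) else 0) + (if l = j then (1 : ℝ) else 0)
            + (if k = i then (1 : ℝ) else 0) + (if k = j then (1 : ℝ) else 0))) := by
  simp only [Finset.card_insert_eq_ite, Finset.mem_insert, Finset.mem_singleton,
    Finset.card_singleton]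
  by_cases hij : i = j <;> by_cases hik : i = k <;> by_cases hil : i = l <;>
    by_cases hjk : j = k <;> by_cases hjl : j = l <;> by_cases hkl : k = l <;>
    simp_all [eq_comm] <;> norm_num

lemma sum_guard {n : ℕ} (i : Fin n) (X : Fin n → ℝ) :
    ∑ j, (if i = j then 0 else X j) = ∑ j ∈ Finset.univ.erase i, X j := by
  have h : ∀ j, (if i = j then (0 : ℝ) else X j) = X j - (if i = j then X j else 0) := by
    intro j; by_cases h : i = j <;> simp [h]
  simp only [h, Finset.sum_sub_distrib, Finset.sum_ite_eq, Finset.mem_univ, if_true]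
  rw [Finset.sum_erase_eq_sub (Finset.mem_univ i)]

/-- correctness of the fast QUBO variance algorithm: the value it
computes equals `Var(f(X)) = E[f(X)²] − E[f(X)]²` for `X` uniform over
`{0,1}ⁿ`. -/
theorem fast_qubo_variance_correct (n : ℕ) (Q : Matrix (Fin n) (Fin n) ℝ)
    (hQ : Q.IsSymm) :
    (1 / 16) * (∑ i, ∑ j ∈ Finset.univ.erase i, Q i j * (Q i j + Q j i)) +
        (1 / 16) * (∑ i, ∑ j, ∑ k, Q i j * (Q k i + Q k j + Q i k + Q j k)) =
      E n (fun x => (∑ i, ∑ j, Q i j * bval (x i) * bval (x j)) ^ 2) -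
        (E n (fun x => ∑ i, ∑ j, Q i j * bval (x i) * bval (x j))) ^ 2 := by
  have hEf : E n (fun x => ∑ i, ∑ j, Q i j * bval (x i) * bval (x j))
      = ∑ i, ∑ j, Q i j * (2 : ℝ)⁻¹ ^ ({i, j} : Finset (Fin n)).card := by
    rw [E_sum]
    refine Finset.sum_congr rfl fun i _ => ?_
    rw [E_sum]
    refine Finset.sum_congr rfl fun j _ => ?_
    rw [show (fun x : Fin n → Bool => Q i j * bval (x i) * bval (x j))
        = fun x => Q i j * (bval (x i) * bval (x j)) from funext fun x => by ring,
      E_const_mul, E_mul_pair]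
  have hsq : ∀ x : Fin n → Bool, (∑ i, ∑ j, Q i j * bval (x i) * bval (x j)) ^ 2
      = ∑ i, ∑ j, ∑ k, ∑ l, Q i j * Q k l
          * (bval (x i) * bval (x j) * (bval (x k) * bval (x l))) := by
    intro x
    rw [sq, Finset.sum_mul_sum]
    refine Finset.sum_congr rfl fun i _ => ?_
    have h : ∀ k : Fin n,
        (∑ j, Q i j * bval (x i) * bval (x j)) * (∑ l, Q k l * bval (x k) * bval (x l))
          = ∑ j, ∑ l, Q i j * Q k l
              * (bval (x i) * bval (x j) * (bval (x k) * bval (x l))) := by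
      intro k
      rw [Finset.sum_mul_sum]
      exact Finset.sum_congr rfl fun j _ => Finset.sum_congr rfl fun l _ => by ring
    simp only [h]
    exact Finset.sum_comm
  have hEf2 : E n (fun x => (∑ i, ∑ j, Q i j * bval (x i) * bval (x j)) ^ 2)
      = ∑ i, ∑ j, ∑ k, ∑ l, Q i j * Q k l
          * (2 : ℝ)⁻¹ ^ ({i, j, k, l} : Finset (Fin n)).card := by
    simp only [hsq]
    rw [E_sum]; refine Finset.sum_congr rfl fun i _ => ?_
    rw [E_sum]; refine Finset.sum_congr rfl fun j _ => ?_
    rw [E_sum]; refine Finset.sum_congr rfl fun k _ => ?_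
    rw [E_sum]; refine Finset.sum_congr rfl fun l _ => ?_
    rw [show (fun x : Fin n → Bool => Q i j * Q k l
          * (bval (x i) * bval (x j) * (bval (x k) * bval (x l))))
        = fun x => (Q i j * Q k l) * (bval (x i) * bval (x j) * (bval (x k) * bval (x l)))
        from rfl, E_const_mul, E_mul_quad]
  have hsq2 : (∑ i, ∑ j, Q i j * (2 : ℝ)⁻¹ ^ ({i, j} : Finset (Fin n)).card) ^ 2
      = ∑ i, ∑ j, ∑ k, ∑ l, Q i j * Q k l
          * ((2 : ℝ)⁻¹ ^ ({i, j} : Finset (Fin n)).card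
            * (2 : ℝ)⁻¹ ^ ({k, l} : Finset (Fin n)).card) := by
    rw [sq, Finset.sum_mul_sum]
    refine Finset.sum_congr rfl fun i _ => ?_
    have h : ∀ k : Fin n,
        (∑ j, Q i j * (2 : ℝ)⁻¹ ^ ({i, j} : Finset (Fin n)).card)
            * (∑ l, Q k l * (2 : ℝ)⁻¹ ^ ({k, l} : Finset (Fin n)).card)
          = ∑ j, ∑ l, Q i j * Q k l
              * ((2 : ℝ)⁻¹ ^ ({i, j} : Finset (Fin n)).card
                * (2 : ℝ)⁻¹ ^ ({k, l} : Finset (Fin n)).card) := by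
      intro k
      rw [Finset.sum_mul_sum]
      exact Finset.sum_congr rfl fun j _ => Finset.sum_congr rfl fun l _ => by ring
    simp only [h]
    exact Finset.sum_comm
  rw [hEf2, hEf, hsq2]
  have hdiff : (∑ i, ∑ j, ∑ k, ∑ l, Q i j * Q k l
          * ((2 : ℝ)⁻¹ ^ ({i, j, k, l} : Finset (Fin n)).card
            - (2 : ℝ)⁻¹ ^ ({i, j} : Finset (Fin n)).card
              * (2 : ℝ)⁻¹ ^ ({k, l} : Finset (Fin n)).card))
      = (∑ i, ∑ j, ∑ k, ∑ l, Q i j * Q k l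
          * (2 : ℝ)⁻¹ ^ ({i, j, k, l} : Finset (Fin n)).card)
        - ∑ i, ∑ j, ∑ k, ∑ l, Q i j * Q k l
          * ((2 : ℝ)⁻¹ ^ ({i, j} : Finset (Fin n)).card
            * (2 : ℝ)⁻¹ ^ ({k, l} : Finset (Fin n)).card) := by
    simp only [mul_sub, Finset.sum_sub_distrib]
  rw [← hdiff]
  simp only [key_coeff]
  have hinner : ∀ i j : Fin n,
      (∑ k, ∑ l, Q i j * Q k l * ((1 / 16) * ((if i = j then 0 else
            (if k = i then (if l = j then (1 : ℝ) else 0) else 0)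
            + (if k = j then (if l = i then (1 : ℝ) else 0) else 0))
          + ((if l = i then (1 : ℝ) else 0) + (if l = j then (1 : ℝ) else 0)
            + (if k = i then (1 : ℝ) else 0) + (if k = j then (1 : ℝ) else 0)))))
      = (1 / 16) * (if i = j then 0 else Q i j * (Q i j + Q j i))
        + (1 / 16) * (∑ k, Q i j * (Q k i + Q k j + Q i k + Q j k)) := by
    intro i j
    by_cases hij : i = j <;>
      simp only [hij, if_true, if_false, ite_true, ite_false, mul_add, mul_ite, ite_mul,
        mul_zero, zero_mul, mul_one, zero_add, add_zero, Finset.sum_add_distrib,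
        Finset.sum_ite_eq', Finset.sum_ite_eq, Finset.mem_univ, if_true, Finset.mul_sum] <;>
      ring_nf <;>
      simp [mul_comm, mul_left_comm, mul_assoc] <;> ring
  simp only [hinner]
  simp only [Finset.sum_add_distrib, ← Finset.mul_sum, sum_guard]
end
end
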